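/- Let A be a bounded K-lattice, with ∼x := x → 1, and let f : A → K(A⁻) be the canonical embedding f(a) = (a ∧ 1, ∼a ∧ 1) into the twist-product of the negative cone. Then f is surjective (hence an isomorphism of A onto K(A⁻)) if and only if there exists an element o ∈ A with ∼o = o and o ∧ 1 = 0. -/
import Mathlib


class CRL (α : Type*) extends Lattice α, CommMonoid α where
  himp : α → α → α
  resid : ∀ a b c : α, a * b ≤ c ↔ a ≤ himp b c

class CIRL (α : Type*) extends CRL α where
  le_one : ∀ a : α, a ≤ 1

class BCRL (α : Type*) extends CIRL α, Zero α where
  zero_le : ∀ a : α, (0 : α) ≤ a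

class KLattice (α : Type*) extends CRL α where
  one_involutive : ∀ x : α, himp (himp x 1) 1 = x
  one_distrib_meet : ∀ x y z : α, (x = 1 ∨ y = 1 ∨ z = 1) →
    x ⊓ (y ⊔ z) = (x ⊓ y) ⊔ (x ⊓ z)
  one_distrib_join : ∀ x y z : α, (x = 1 ∨ y = 1 ∨ z = 1) →
    x ⊔ (y ⊓ z) = (x ⊔ y) ⊓ (x ⊔ z)
  K1 : ∀ x y : α, (x * y) ⊓ 1 = (x ⊓ 1) * (y ⊓ 1)
  K2 : ∀ x y : α, himp (x ⊓ 1) y ⊓ himp (himp y 1 ⊓ 1) (himp x 1) = himp x y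

class BKLattice (α : Type*) extends KLattice α, Zero α where
  zero_le : ∀ a : α, (0 : α) ≤ a

section Aux

variable {α : Type*} [CRL α]

lemma CRL.one_le_himp_iff {a b : α} : 1 ≤ CRL.himp a b ↔ a ≤ b := by
  rw [← CRL.resid, one_mul]

lemma CRL.mul_le_mul_right'' {a b : α} (h : a ≤ b) (c : α) : a * c ≤ b * c := by
  rw [CRL.resid]
  exact le_trans h ((CRL.resid b c (b * c)).mp le_rfl)

lemma CRL.himp_anti {a b : α} (h : a ≤ b) (c : α) : CRL.himp b c ≤ CRL.himp a c := by
  rw [← CRL.resid]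
  calc CRL.himp b c * a ≤ CRL.himp b c * b := by
        rw [mul_comm _ a, mul_comm _ b]; exact CRL.mul_le_mul_right'' h _
    _ ≤ c := (CRL.resid _ b c).mpr le_rfl

lemma CRL.himp_sup (a b c : α) :
    CRL.himp (a ⊔ b) c = CRL.himp a c ⊓ CRL.himp b c := by
  apply le_antisymm
  · exact le_inf (CRL.himp_anti le_sup_left c) (CRL.himp_anti le_sup_right c)
  · rw [← CRL.resid, mul_comm, CRL.resid]
    refine sup_le ?_ ?_
    · rw [← CRL.resid, mul_comm, CRL.resid]; exact inf_le_left
    · rw [← CRL.resid, mul_comm, CRL.resid]; exact inf_le_right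

end Aux

section KAux

variable {α : Type*} [KLattice α]

lemma KLattice.neg_inf (a b : α) :
    CRL.himp (a ⊓ b) 1 = CRL.himp a 1 ⊔ CRL.himp b 1 := by
  have h : CRL.himp (CRL.himp a 1 ⊔ CRL.himp b 1) 1 = a ⊓ b := by
    rw [CRL.himp_sup, KLattice.one_involutive, KLattice.one_involutive]
  calc CRL.himp (a ⊓ b) 1
      = CRL.himp (CRL.himp (CRL.himp a 1 ⊔ CRL.himp b 1) 1) 1 := by rw [h]
    _ = CRL.himp a 1 ⊔ CRL.himp b 1 := KLattice.one_involutive _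

end KAux

section BKAux

variable {α : Type*} [BKLattice α]

lemma BKLattice.aux_le {x y : α} (hx : x ⊓ 1 = 0) (hy : CRL.himp y 1 ⊓ 1 = 0) :
    x ≤ y := by
  have k2 := KLattice.K2 x y
  rw [hx, hy] at k2
  have h0 : ∀ z : α, (1 : α) ≤ CRL.himp 0 z := fun z =>
    CRL.one_le_himp_iff.mpr (BKLattice.zero_le z)
  have h1 : (1 : α) ≤ CRL.himp x y := by
    rw [← k2]; exact le_inf (h0 y) (h0 _)
  exact CRL.one_le_himp_iff.mp h1

end BKAux

/-- for a bounded K-lattice `A`, the canonical embedding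
`f(a) = (a ∧ 1, ∼a ∧ 1)` of `A` into the twist-product `K(A⁻)` of its negative
cone is surjective (hence an isomorphism onto `K(A⁻)`, whose universe is the
set of pairs of elements `≤ 1`) if and only if there is an element `o` with
`∼o = o` and `o ∧ 1 = 0`. -/
theorem embedding_surjective_iff_fixpoint {α : Type*} [BKLattice α] :
    (∀ a b : α, a ≤ 1 → b ≤ 1 →
      ∃ x : α, ((x ⊓ 1, CRL.himp x 1 ⊓ 1) : α × α) = (a, b)) ↔
    ∃ o : α, CRL.himp o 1 = o ∧ o ⊓ 1 = 0 := by
  constructor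
  · intro h
    obtain ⟨x, hx⟩ := h 0 0 (BKLattice.zero_le 1) (BKLattice.zero_le 1)
    have h1 : x ⊓ 1 = 0 := congrArg Prod.fst hx
    have h2 : CRL.himp x 1 ⊓ 1 = 0 := congrArg Prod.snd hx
    refine ⟨x, le_antisymm ?_ ?_, h1⟩
    · -- ∼x ≤ x
      exact BKLattice.aux_le h2 h2
    · -- x ≤ ∼x
      refine BKLattice.aux_le h1 ?_
      rw [KLattice.one_involutive]; exact h1
  · rintro ⟨o, ho, ho1⟩ a b ha hb
    refine ⟨a ⊔ (o ⊓ CRL.himp b 1), ?_⟩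
    have hob : (o ⊓ CRL.himp b 1) ⊓ 1 = 0 := by
      rw [inf_right_comm, ho1]
      exact inf_eq_left.mpr (BKLattice.zero_le _)
    have hdm : CRL.himp (o ⊓ CRL.himp b 1) 1 = o ⊔ b := by
      rw [KLattice.neg_inf, ho, KLattice.one_involutive]
    refine Prod.ext ?_ ?_
    · show (a ⊔ (o ⊓ CRL.himp b 1)) ⊓ 1 = a
      rw [inf_comm, KLattice.one_distrib_meet 1 a _ (Or.inl rfl),
        inf_eq_right.mpr ha, inf_comm (1 : α), hob]
      exact sup_eq_left.mpr (BKLattice.zero_le a)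
    · show CRL.himp (a ⊔ (o ⊓ CRL.himp b 1)) 1 ⊓ 1 = b
      rw [CRL.himp_sup, hdm, inf_assoc, inf_comm (o ⊔ b),
        KLattice.one_distrib_meet 1 o b (Or.inl rfl), inf_comm (1 : α) o, ho1,
        inf_eq_right.mpr hb]
      rw [sup_eq_right.mpr (BKLattice.zero_le b)]
      exact inf_eq_right.mpr (le_trans hb (CRL.one_le_himp_iff.mpr ha))
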